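/- Let σ, ρ > 0, N ≥ 1, and let λ_1,…,λ_N be pairwise distinct purely imaginary complex numbers. Then the minimization problem min_{γ ∈ ℂ^N} ‖e^{-·²/(2σ)} - Σ_{j=1}^N γ_j e^{λ_j ·}‖²_{L²(ℝ,ρ)} has a unique solution γ; all entries γ_j are real, and γ is the unique solution of the linear system H γ = g. -/

import Mathlib

open Real MeasureTheory Finset Nat


lemma gauss_int (b : ℝ) (hb : 0 < b) (c : ℂ) :
    ∫ t : ℝ, Complex.exp (c * t) * (Real.exp (-t^2/(2*b)) : ℂ)
      = (Real.sqrt (2*π*b) : ℂ) * Complex.exp (c^2 * b / 2) := by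
  have hbne : (b : ℂ) ≠ 0 := by exact_mod_cast hb.ne'
  have h1 : ∀ t : ℝ, Complex.exp (c * t) * (Real.exp (-t^2/(2*b)) : ℂ)
      = Complex.exp ((-(1/(2*b)) : ℝ) * (t:ℂ)^2 + c * t + 0) := by
    intro t
    rw [Complex.ofReal_exp, ← Complex.exp_add]
    congr 1
    push_cast
    field_simp
    ring
  simp_rw [h1]
  rw [integral_cexp_quadratic (by simpa using by positivity : ((-(1/(2*b)):ℝ):ℂ).re < 0) c 0]
  congr 1
  · have h2 : (↑π / -((-(1/(2*b)):ℝ):ℂ)) = ((2*π*b : ℝ) : ℂ) := by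
      push_cast
      field_simp
    rw [h2, show ((1:ℂ)/2) = ((1/2 : ℝ) : ℂ) by norm_num,
      ← Complex.ofReal_cpow (by positivity)]
    norm_num [Real.sqrt_eq_rpow]
  · congr 1
    push_cast
    field_simp
    ring

lemma gauss_integrable (b : ℝ) (hb : 0 < b) (c : ℂ) :
    Integrable (fun t : ℝ => Complex.exp (c * t) * (Real.exp (-t^2/(2*b)) : ℂ)) := by
  have h1 : ∀ t : ℝ, Complex.exp (c * t) * (Real.exp (-t^2/(2*b)) : ℂ)
      = Complex.exp ((-(1/(2*b)) : ℝ) * (t:ℂ)^2 + c * t + 0) := by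
    intro t
    rw [Complex.ofReal_exp, ← Complex.exp_add]
    congr 1
    push_cast
    field_simp
    ring
  simp_rw [h1]
  exact integrable_cexp_quadratic' (by simpa using by positivity) c 0

lemma bdd_gauss_integrable (b : ℝ) (hb : 0 < b) (f : ℝ → ℂ) (hf : Continuous f) (C : ℝ)
    (hC : ∀ t, ‖f t‖ ≤ C) :
    Integrable (fun t : ℝ => f t * (Real.exp (-t^2/(2*b)) : ℂ)) := by
  refine Integrable.mono' (g := fun t => C * Real.exp (-(1/(2*b)) * t^2))
    (((integrable_exp_neg_mul_sq (show (0:ℝ) < 1/(2*b) by positivity)).const_mul C))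
    ((hf.mul (Complex.continuous_ofReal.comp (by continuity))).aestronglyMeasurable)
    (Filter.Eventually.of_forall fun t => ?_)
  have he : -t^2/(2*b) = -(1/(2*b)) * t^2 := by ring
  rw [norm_mul, Complex.norm_real, Real.norm_eq_abs, abs_of_nonneg (Real.exp_pos _).le, he]
  exact mul_le_mul_of_nonneg_right (hC t) (Real.exp_pos _).le

lemma bdd_gauss_integrable_real (b : ℝ) (hb : 0 < b) (f : ℝ → ℝ) (hf : Continuous f) (C : ℝ)
    (hC : ∀ t, |f t| ≤ C) :
    Integrable (fun t : ℝ => f t * Real.exp (-t^2/(2*b))) := by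
  refine Integrable.mono' (g := fun t => C * Real.exp (-(1/(2*b)) * t^2))
    (((integrable_exp_neg_mul_sq (show (0:ℝ) < 1/(2*b) by positivity)).const_mul C))
    ((hf.mul (by continuity)).aestronglyMeasurable)
    (Filter.Eventually.of_forall fun t => ?_)
  have he : -t^2/(2*b) = -(1/(2*b)) * t^2 := by ring
  rw [Real.norm_eq_abs, abs_mul, abs_of_nonneg (Real.exp_pos _).le, he]
  exact mul_le_mul_of_nonneg_right (hC t) (Real.exp_pos _).le

noncomputable def esum {N : ℕ} (lam : Fin N → ℂ) (v : Fin N → ℂ) (t : ℝ) : ℂ :=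
  ∑ j, v j * Complex.exp (lam j * t)

lemma esum_continuous {N : ℕ} (lam v : Fin N → ℂ) : Continuous (esum lam v) := by
  unfold esum
  exact continuous_finset_sum _ fun j _ =>
    continuous_const.mul ((continuous_const.mul Complex.continuous_ofReal).cexp)

lemma esum_bound {N : ℕ} (lam v : Fin N → ℂ) (him : ∀ j, (lam j).re = 0) (t : ℝ) :
    ‖esum lam v t‖ ≤ ∑ j, ‖v j‖ := by
  refine le_trans (norm_sum_le _ _) (Finset.sum_le_sum fun j _ => ?_)
  rw [norm_mul, Complex.norm_exp]
  have : (lam j * t).re = 0 := by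
    simp [Complex.mul_re, him j]
  simp [this]

lemma esum_sub {N : ℕ} (lam v w : Fin N → ℂ) (t : ℝ) :
    esum lam (v - w) t = esum lam v t - esum lam w t := by
  unfold esum
  rw [← Finset.sum_sub_distrib]
  exact Finset.sum_congr rfl fun j _ => by simp [sub_mul]

lemma esum_ne_zero {N : ℕ} (lam : Fin N → ℂ) (hinj : Function.Injective lam)
    (him : ∀ j, (lam j).re = 0) (u : Fin N → ℂ) (hu : u ≠ 0) :
    ∃ t : ℝ, esum lam u t ≠ 0 := by
  by_contra h
  push_neg at h
  -- characters
  have hconj : ∀ (c : ℂ), c.re = 0 → c ≠ 0 → ∃ t : ℝ, Complex.exp (c * t) ≠ 1 := by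
    intro c hre hc
    have him' : c.im ≠ 0 := by
      intro h0
      exact hc (Complex.ext hre h0)
    have himc : (c.im : ℂ) ≠ 0 := by exact_mod_cast him'
    have hceq : c = (c.im : ℂ) * Complex.I := Complex.ext (by simp [hre]) (by simp)
    refine ⟨π / c.im, ?_⟩
    have hmul : c * ((π / c.im : ℝ) : ℂ) = (π : ℂ) * Complex.I := by
      nth_rewrite 1 [hceq]
      push_cast
      field_simp
    rw [hmul, Complex.exp_pi_mul_I]
    norm_num
  set χ : Fin N → (Multiplicative ℝ →* ℂ) := fun j =>
    { toFun := fun t => Complex.exp (lam j * (Multiplicative.toAdd t : ℝ))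
      map_one' := by simp
      map_mul' := by
        intro s t
        simp only [toAdd_mul, Complex.ofReal_add, mul_add, Complex.exp_add] } with hχ
  have hχinj : Function.Injective χ := by
    intro j m hjm
    by_contra hne
    have hlamne : lam j - lam m ≠ 0 := sub_ne_zero.mpr fun he => hne (hinj he)
    obtain ⟨t, ht⟩ := hconj (lam j - lam m) (by simp [him j, him m]) hlamne
    apply ht
    have := congrFun (congrArg (fun (f : Multiplicative ℝ →* ℂ) => (f : Multiplicative ℝ → ℂ)) hjm)
      (Multiplicative.ofAdd t)
    simp only [hχ, MonoidHom.coe_mk, OneHom.coe_mk, toAdd_ofAdd] at this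
    rw [sub_mul, Complex.exp_sub, this, div_self (Complex.exp_ne_zero _)]
  have hli := (linearIndependent_monoidHom (Multiplicative ℝ) ℂ).comp χ hχinj
  rw [Fintype.linearIndependent_iff] at hli
  have hzero : (∑ j, u j • ((χ j : Multiplicative ℝ → ℂ))) = 0 := by
    funext t
    have := h (Multiplicative.toAdd t)
    simpa [esum, hχ, Finset.sum_apply] using this
  exact hu (funext (hli u hzero))

lemma Q_integrable (ρ : ℝ) (hρ : 0 < ρ) {N : ℕ} (lam : Fin N → ℂ) (him : ∀ j, (lam j).re = 0)
    (u : Fin N → ℂ) :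
    Integrable (fun t : ℝ => Complex.normSq (esum lam u t) * Real.exp (-t^2/(2*ρ))) := by
  refine bdd_gauss_integrable_real ρ hρ _
    (Complex.continuous_normSq.comp (esum_continuous lam u)) ((∑ j, ‖u j‖)^2) fun t => ?_
  rw [abs_of_nonneg (Complex.normSq_nonneg _)]
  rw [Complex.normSq_eq_norm_sq]
  exact pow_le_pow_left₀ (norm_nonneg _) (esum_bound lam u him t) 2

lemma Q_pos (ρ : ℝ) (hρ : 0 < ρ) {N : ℕ} (lam : Fin N → ℂ) (hinj : Function.Injective lam)
    (him : ∀ j, (lam j).re = 0) (u : Fin N → ℂ) (hu : u ≠ 0) :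
    0 < ∫ t : ℝ, Complex.normSq (esum lam u t) * Real.exp (-t^2/(2*ρ)) := by
  obtain ⟨t0, ht0⟩ := esum_ne_zero lam hinj him u hu
  set f : ℝ → ℝ := fun t => Complex.normSq (esum lam u t) * Real.exp (-t^2/(2*ρ)) with hf
  have hfc : Continuous f := (Complex.continuous_normSq.comp (esum_continuous lam u)).mul
    (by continuity)
  have hnn : 0 ≤ f := fun t => mul_nonneg (Complex.normSq_nonneg _) (Real.exp_pos _).le
  rw [MeasureTheory.integral_pos_iff_support_of_nonneg hnn (Q_integrable ρ hρ lam him u)]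
  refine IsOpen.measure_pos volume ?_ ⟨t0, ?_⟩
  · have : Function.support f = f ⁻¹' ({0}ᶜ) := by
      ext x; simp [Function.mem_support]
    rw [this]
    exact IsOpen.preimage hfc isOpen_compl_singleton
  · simp only [Function.mem_support, hf]
    exact mul_ne_zero (fun h0 => ht0 (Complex.normSq_eq_zero.mp h0)) (Real.exp_ne_zero _)

lemma ip_fe (σ ρ : ℝ) (hσ : 0 < σ) (hρ : 0 < ρ) (c : ℂ) :
    ∫ t : ℝ, (Real.exp (-t^2/(2*σ)) : ℂ) * Complex.exp (c * t) * (Real.exp (-t^2/(2*ρ)) : ℂ)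
      = (Real.sqrt (2*π*σ*ρ/(σ+ρ)) : ℂ)
        * Complex.exp ((σ:ℂ)*(ρ:ℂ)*c^2/(2*((σ:ℂ)+(ρ:ℂ)))) := by
  have hb : 0 < σ*ρ/(σ+ρ) := by positivity
  have hsρ : σ + ρ ≠ 0 := by positivity
  have h1 : ∀ t : ℝ, (Real.exp (-t^2/(2*σ)) : ℂ) * Complex.exp (c*t) * (Real.exp (-t^2/(2*ρ)) : ℂ)
      = Complex.exp (c*t) * (Real.exp (-t^2/(2*(σ*ρ/(σ+ρ)))) : ℂ) := by
    intro t
    have h2 : -t^2/(2*σ) + -t^2/(2*ρ) = -t^2/(2*(σ*ρ/(σ+ρ))) := by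
      field_simp
      ring
    rw [← h2, Real.exp_add]
    push_cast
    ring
  simp_rw [h1]
  rw [gauss_int _ hb c]
  congr 2
  · rw [show 2*π*(σ*ρ/(σ+ρ)) = 2*π*σ*ρ/(σ+ρ) by field_simp]
  · have hc : ((σ:ℂ)+(ρ:ℂ)) ≠ 0 := by
      rw [← Complex.ofReal_add]
      exact_mod_cast hsρ
    push_cast
    field_simp

lemma norm_cexp_im (c : ℂ) (hc : c.re = 0) (t : ℝ) : ‖Complex.exp (c * t)‖ = 1 := by
  rw [Complex.norm_exp]
  simp [Complex.mul_re, hc]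

lemma F_norm_le (σ : ℝ) (hσ : 0 < σ) (t : ℝ) : ‖((Real.exp (-t^2/(2*σ)) : ℝ) : ℂ)‖ ≤ 1 := by
  rw [Complex.norm_real, Real.norm_eq_abs, abs_of_nonneg (Real.exp_pos _).le]
  rw [Real.exp_le_one_iff, neg_div, neg_nonpos]
  positivity

lemma ortho (σ ρ : ℝ) (hσ : 0 < σ) (hρ : 0 < ρ) {N : ℕ} (lam : Fin N → ℂ)
    (him : ∀ j, (lam j).re = 0) (γ : Fin N → ℂ)
    (hsys : ∀ j : Fin N, ∑ m : Fin N,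
        (Real.sqrt (2 * π * ρ) : ℂ) * Complex.exp ((lam j - lam m) ^ 2 * (ρ : ℂ) / 2) * γ m
          = (Real.sqrt (2 * π * σ * ρ / (σ + ρ)) : ℂ) *
              Complex.exp ((σ : ℂ) * (ρ : ℂ) * (lam j) ^ 2 / (2 * ((σ : ℂ) + (ρ : ℂ)))))
    (j : Fin N) :
    ∫ t : ℝ, ((Real.exp (-t^2/(2*σ)) : ℂ) - esum lam γ t) * Complex.exp (-lam j * t)
        * (Real.exp (-t^2/(2*ρ)) : ℂ) = 0 := by
  have hpt : ∀ t : ℝ, ((Real.exp (-t^2/(2*σ)) : ℂ) - esum lam γ t) * Complex.exp (-lam j * t)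
        * (Real.exp (-t^2/(2*ρ)) : ℂ)
      = (Real.exp (-t^2/(2*σ)) : ℂ) * Complex.exp (-lam j * t) * (Real.exp (-t^2/(2*ρ)) : ℂ)
        - ∑ m, γ m * (Complex.exp ((lam m - lam j) * t) * (Real.exp (-t^2/(2*ρ)) : ℂ)) := by
    intro t
    rw [sub_mul, sub_mul]
    congr 1
    rw [esum, Finset.sum_mul, Finset.sum_mul]
    refine Finset.sum_congr rfl fun m _ => ?_
    have he : Complex.exp (lam m * t) * Complex.exp (-lam j * t)
        = Complex.exp ((lam m - lam j) * t) := by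
      rw [← Complex.exp_add]
      congr 1
      ring
    rw [show γ m * Complex.exp (lam m * t) * Complex.exp (-lam j * t)
          * (Real.exp (-t^2/(2*ρ)) : ℂ)
        = γ m * ((Complex.exp (lam m * t) * Complex.exp (-lam j * t))
          * (Real.exp (-t^2/(2*ρ)) : ℂ)) by ring, he]
  simp_rw [hpt]
  have hint1 : Integrable (fun t : ℝ =>
      (Real.exp (-t^2/(2*σ)) : ℂ) * Complex.exp (-lam j * t) * (Real.exp (-t^2/(2*ρ)) : ℂ)) := by
    refine bdd_gauss_integrable ρ hρ _ ?_ 1 fun t => ?_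
    · exact ((Complex.continuous_ofReal.comp (by continuity)).mul
        ((continuous_const.mul Complex.continuous_ofReal).cexp))
    · rw [norm_mul, norm_cexp_im (-lam j) (by simp [him j]) t, mul_one]
      exact F_norm_le σ hσ t
  have hint2 : ∀ m ∈ Finset.univ, Integrable (fun t : ℝ =>
      γ m * (Complex.exp ((lam m - lam j) * t) * (Real.exp (-t^2/(2*ρ)) : ℂ))) :=
    fun m _ => (gauss_integrable ρ hρ (lam m - lam j)).const_mul (γ m)
  rw [integral_sub hint1 (integrable_finset_sum _ hint2), integral_finset_sum _ hint2]
  simp_rw [integral_const_mul, gauss_int ρ hρ]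
  rw [ip_fe σ ρ hσ hρ (-lam j), sub_eq_zero, show (-lam j)^2 = (lam j)^2 by ring, ← hsys j]
  refine Finset.sum_congr rfl fun m _ => ?_
  rw [show (lam m - lam j)^2 = (lam j - lam m)^2 by ring]
  ring


/-- The squared weighted `L²(ℝ,ρ)` approximation error
`‖e^{-·²/(2σ)} - Σ_j γ_j e^{λ_j ·}‖²_{L²(ℝ,ρ)}`. -/
noncomputable def errE (σ ρ : ℝ) {N : ℕ} (lam : Fin N → ℂ) (γ : Fin N → ℂ) : ℝ :=
  ∫ t : ℝ, ‖(Real.exp (-t ^ 2 / (2 * σ)) : ℂ)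
      - ∑ j : Fin N, γ j * Complex.exp (lam j * (t : ℂ))‖ ^ 2 * Real.exp (-t ^ 2 / (2 * ρ))

lemma errE_expand (σ ρ : ℝ) (hσ : 0 < σ) (hρ : 0 < ρ) {N : ℕ} (lam : Fin N → ℂ)
    (him : ∀ j, (lam j).re = 0) (γ : Fin N → ℂ)
    (hsys : ∀ j : Fin N, ∑ m : Fin N,
        (Real.sqrt (2 * π * ρ) : ℂ) * Complex.exp ((lam j - lam m) ^ 2 * (ρ : ℂ) / 2) * γ m
          = (Real.sqrt (2 * π * σ * ρ / (σ + ρ)) : ℂ) *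
              Complex.exp ((σ : ℂ) * (ρ : ℂ) * (lam j) ^ 2 / (2 * ((σ : ℂ) + (ρ : ℂ)))))
    (v : Fin N → ℂ) :
    errE σ ρ lam v = errE σ ρ lam γ
      + ∫ t : ℝ, Complex.normSq (esum lam (v - γ) t) * Real.exp (-t^2/(2*ρ)) := by
  set u := v - γ with hu
  set A : ℝ → ℂ := fun t => ((Real.exp (-t^2/(2*σ)) : ℝ) : ℂ) - esum lam γ t with hA
  have hγb : ∀ t, ‖A t‖ ≤ 1 + ∑ j, ‖γ j‖ := fun t =>
    (norm_sub_le _ _).trans (add_le_add (F_norm_le σ hσ t) (esum_bound lam γ him t))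
  have hAc : Continuous A :=
    (Complex.continuous_ofReal.comp (by continuity)).sub (esum_continuous lam γ)
  have hconjlam : ∀ j, (starRingEnd ℂ) (lam j) = -lam j :=
    fun j => Complex.ext (by simp [him j]) (by simp)
  have hγbnn : (0:ℝ) ≤ 1 + ∑ j, ‖γ j‖ := by positivity
  -- pointwise identity
  have hpt : ∀ t : ℝ,
      ‖((Real.exp (-t^2/(2*σ)) : ℝ) : ℂ) - ∑ j, v j * Complex.exp (lam j * t)‖^2
          * Real.exp (-t^2/(2*ρ))
      = ‖((Real.exp (-t^2/(2*σ)) : ℝ) : ℂ) - ∑ j, γ j * Complex.exp (lam j * t)‖^2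
          * Real.exp (-t^2/(2*ρ))
        + Complex.normSq (esum lam u t) * Real.exp (-t^2/(2*ρ))
        - 2 * ((A t * (starRingEnd ℂ) (esum lam u t))
            * ((Real.exp (-t^2/(2*ρ)) : ℝ) : ℂ)).re := by
    intro t
    rw [Complex.sq_norm, Complex.sq_norm]
    have h1 : ((Real.exp (-t^2/(2*σ)) : ℝ) : ℂ) - ∑ j, v j * Complex.exp (lam j * t)
        = A t - esum lam u t := by
      rw [hA, hu, esum_sub]
      unfold esum
      ring
    have h2 : ((Real.exp (-t^2/(2*σ)) : ℝ) : ℂ) - ∑ j, γ j * Complex.exp (lam j * t) = A t := rfl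
    rw [h1, h2, Complex.normSq_sub]
    have h3 : ((A t * (starRingEnd ℂ) (esum lam u t)) * ((Real.exp (-t^2/(2*ρ)) : ℝ) : ℂ)).re
        = (A t * (starRingEnd ℂ) (esum lam u t)).re * Real.exp (-t^2/(2*ρ)) := by
      simp [Complex.mul_re, -Complex.ofReal_exp]
    rw [h3]
    ring
  -- integrabilities
  have ha : Integrable (fun t : ℝ =>
      ‖((Real.exp (-t^2/(2*σ)) : ℝ) : ℂ) - ∑ j, γ j * Complex.exp (lam j * t)‖^2
        * Real.exp (-t^2/(2*ρ))) := by
    refine bdd_gauss_integrable_real ρ hρ _ ((continuous_norm.comp hAc).pow 2)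
      ((1 + ∑ j, ‖γ j‖)^2) fun t => ?_
    rw [abs_of_nonneg (by positivity)]
    exact pow_le_pow_left₀ (norm_nonneg _) (hγb t) 2
  have hb : Integrable (fun t : ℝ => Complex.normSq (esum lam u t) * Real.exp (-t^2/(2*ρ))) :=
    Q_integrable ρ hρ lam him u
  have hcint : Integrable (fun t : ℝ =>
      (A t * (starRingEnd ℂ) (esum lam u t)) * ((Real.exp (-t^2/(2*ρ)) : ℝ) : ℂ)) := by
    refine bdd_gauss_integrable ρ hρ _ (hAc.mul (Complex.continuous_conj.comp
      (esum_continuous lam u))) ((1 + ∑ j, ‖γ j‖) * (∑ j, ‖u j‖)) fun t => ?_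
    rw [norm_mul]
    have : ‖(starRingEnd ℂ) (esum lam u t)‖ = ‖esum lam u t‖ := RCLike.norm_conj _
    rw [this]
    exact mul_le_mul (hγb t) (esum_bound lam u him t) (norm_nonneg _) hγbnn
  have hc : Integrable (fun t : ℝ => 2 * ((A t * (starRingEnd ℂ) (esum lam u t))
      * ((Real.exp (-t^2/(2*ρ)) : ℝ) : ℂ)).re) := (hcint.re).const_mul 2
  -- main computation
  unfold errE
  simp_rw [hpt]
  have hab : Integrable (fun t : ℝ =>
      ‖((Real.exp (-t^2/(2*σ)) : ℝ) : ℂ) - ∑ j, γ j * Complex.exp (lam j * t)‖^2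
          * Real.exp (-t^2/(2*ρ))
        + Complex.normSq (esum lam u t) * Real.exp (-t^2/(2*ρ))) := ha.add hb
  rw [integral_sub hab hc, integral_add ha hb]
  have hz : (∫ t : ℝ, (A t * (starRingEnd ℂ) (esum lam u t))
      * ((Real.exp (-t^2/(2*ρ)) : ℝ) : ℂ)) = 0 := by
    have hpt2 : ∀ t : ℝ, (A t * (starRingEnd ℂ) (esum lam u t))
        * ((Real.exp (-t^2/(2*ρ)) : ℝ) : ℂ)
        = ∑ j, (starRingEnd ℂ) (u j)
            * (A t * Complex.exp (-lam j * t) * ((Real.exp (-t^2/(2*ρ)) : ℝ) : ℂ)) := by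
      intro t
      have hcψ : (starRingEnd ℂ) (esum lam u t)
          = ∑ j, (starRingEnd ℂ) (u j) * Complex.exp (-lam j * t) := by
        unfold esum
        rw [map_sum]
        refine Finset.sum_congr rfl fun j _ => ?_
        rw [map_mul, ← Complex.exp_conj, map_mul, Complex.conj_ofReal, hconjlam j]
      rw [hcψ, Finset.mul_sum, Finset.sum_mul]
      exact Finset.sum_congr rfl fun j _ => by ring
    simp_rw [hpt2]
    have hterm : ∀ j ∈ Finset.univ, Integrable (fun t : ℝ => (starRingEnd ℂ) (u j)
        * (A t * Complex.exp (-lam j * t) * ((Real.exp (-t^2/(2*ρ)) : ℝ) : ℂ))) := by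
      intro j _
      refine Integrable.const_mul ?_ _
      refine bdd_gauss_integrable ρ hρ _ (hAc.mul
        ((continuous_const.mul Complex.continuous_ofReal).cexp)) (1 + ∑ j, ‖γ j‖) fun t => ?_
      rw [norm_mul, norm_cexp_im (-lam j) (by simp [him j]) t, mul_one]
      exact hγb t
    rw [integral_finset_sum _ hterm]
    refine Finset.sum_eq_zero fun j _ => ?_
    rw [integral_const_mul, ortho σ ρ hσ hρ lam him γ hsys j, mul_zero]
  have hre : (∫ t : ℝ, ((A t * (starRingEnd ℂ) (esum lam u t))
      * ((Real.exp (-t^2/(2*ρ)) : ℝ) : ℂ)).re) = 0 := by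
    have := integral_re hcint
    simp only [RCLike.re_to_complex] at this
    rw [this, hz]
    rfl
  have hfin : (∫ t : ℝ, 2 * ((A t * (starRingEnd ℂ) (esum lam u t))
      * ((Real.exp (-t^2/(2*ρ)) : ℝ) : ℂ)).re) = 0 := by
    rw [integral_const_mul, hre, mul_zero]
  rw [hfin, sub_zero]

lemma conj_H (ρ : ℝ) {N : ℕ} (lam : Fin N → ℂ) (him : ∀ j, (lam j).re = 0) (j m : Fin N) :
    (starRingEnd ℂ) ((Real.sqrt (2 * π * ρ) : ℂ)
        * Complex.exp ((lam j - lam m) ^ 2 * (ρ : ℂ) / 2))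
      = (Real.sqrt (2 * π * ρ) : ℂ) * Complex.exp ((lam j - lam m) ^ 2 * (ρ : ℂ) / 2) := by
  have hconjlam : ∀ i, (starRingEnd ℂ) (lam i) = -lam i :=
    fun i => Complex.ext (by simp [him i]) (by simp)
  rw [map_mul, Complex.conj_ofReal, ← Complex.exp_conj]
  congr 2
  rw [map_div₀, map_mul, map_pow, map_sub, hconjlam j, hconjlam m, Complex.conj_ofReal]
  simp only [map_ofNat]
  norm_num
  ring
  simp

lemma conj_g (σ ρ : ℝ) {N : ℕ} (lam : Fin N → ℂ) (him : ∀ j, (lam j).re = 0) (j : Fin N) :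
    (starRingEnd ℂ) ((Real.sqrt (2 * π * σ * ρ / (σ + ρ)) : ℂ) *
        Complex.exp ((σ : ℂ) * (ρ : ℂ) * (lam j) ^ 2 / (2 * ((σ : ℂ) + (ρ : ℂ)))))
      = (Real.sqrt (2 * π * σ * ρ / (σ + ρ)) : ℂ) *
        Complex.exp ((σ : ℂ) * (ρ : ℂ) * (lam j) ^ 2 / (2 * ((σ : ℂ) + (ρ : ℂ)))) := by
  have hconjlam : ∀ i, (starRingEnd ℂ) (lam i) = -lam i :=
    fun i => Complex.ext (by simp [him i]) (by simp)
  rw [map_mul, Complex.conj_ofReal, ← Complex.exp_conj]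
  congr 2
  rw [map_div₀, map_mul, map_mul, map_pow, hconjlam j, Complex.conj_ofReal,
    Complex.conj_ofReal, map_mul, map_add, Complex.conj_ofReal, Complex.conj_ofReal]
  simp only [map_ofNat]
  norm_num

lemma Q_eq_re (ρ : ℝ) (hρ : 0 < ρ) {N : ℕ} (lam : Fin N → ℂ) (him : ∀ j, (lam j).re = 0)
    (u : Fin N → ℂ) :
    (∫ t : ℝ, Complex.normSq (esum lam u t) * Real.exp (-t^2/(2*ρ)))
      = (∑ j, u j * (starRingEnd ℂ) (∑ m,
          (Real.sqrt (2 * π * ρ) : ℂ) * Complex.exp ((lam j - lam m) ^ 2 * (ρ : ℂ) / 2)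
            * u m)).re := by
  have hpt : ∀ t : ℝ, (Complex.normSq (esum lam u t) * Real.exp (-t^2/(2*ρ)) : ℝ)
      = (∑ j, ∑ m, (u j * (starRingEnd ℂ) (u m))
          * (Complex.exp ((lam j - lam m) * t) * ((Real.exp (-t^2/(2*ρ)) : ℝ) : ℂ))).re := by
    intro t
    have h1 : (Complex.normSq (esum lam u t) * Real.exp (-t^2/(2*ρ)) : ℝ)
        = ((esum lam u t * (starRingEnd ℂ) (esum lam u t))
            * ((Real.exp (-t^2/(2*ρ)) : ℝ) : ℂ)).re := by
      rw [Complex.mul_conj]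
      simp [-Complex.ofReal_exp]
    rw [h1]
    congr 1
    have hconjlam : ∀ i, (starRingEnd ℂ) (lam i) = -lam i :=
      fun i => Complex.ext (by simp [him i]) (by simp)
    unfold esum
    rw [map_sum, Finset.sum_mul_sum, Finset.sum_mul]
    refine Finset.sum_congr rfl fun j _ => ?_
    rw [Finset.sum_mul]
    refine Finset.sum_congr rfl fun m _ => ?_
    rw [map_mul, ← Complex.exp_conj, map_mul, Complex.conj_ofReal, hconjlam m]
    rw [show Complex.exp ((lam j - lam m) * t) = Complex.exp (lam j * t)
        * Complex.exp (-lam m * t) by rw [← Complex.exp_add]; congr 1; ring]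
    ring
  simp_rw [hpt]
  have hterm : ∀ j ∈ Finset.univ, ∀ m ∈ Finset.univ, Integrable (fun t : ℝ =>
      (u j * (starRingEnd ℂ) (u m))
        * (Complex.exp ((lam j - lam m) * t) * ((Real.exp (-t^2/(2*ρ)) : ℝ) : ℂ))) :=
    fun j _ m _ => (gauss_integrable ρ hρ (lam j - lam m)).const_mul _
  have hint : Integrable (fun t : ℝ => ∑ j, ∑ m, (u j * (starRingEnd ℂ) (u m))
      * (Complex.exp ((lam j - lam m) * t) * ((Real.exp (-t^2/(2*ρ)) : ℝ) : ℂ))) :=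
    integrable_finset_sum _ fun j hj => integrable_finset_sum _ (hterm j hj)
  have := integral_re hint
  simp only [RCLike.re_to_complex] at this
  rw [this]
  congr 1
  rw [integral_finset_sum _ fun j hj => integrable_finset_sum _ (hterm j hj)]
  refine Finset.sum_congr rfl fun j _ => ?_
  rw [integral_finset_sum _ (hterm j (Finset.mem_univ j)), map_sum, Finset.mul_sum]
  refine Finset.sum_congr rfl fun m _ => ?_
  rw [integral_const_mul, gauss_int ρ hρ (lam j - lam m), map_mul,
    conj_H ρ lam him j m]
  ring

/-- for pairwise distinct purely imaginary `λ_j`, the minimization problem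
has a unique solution `γ`, all of whose entries are real, and `γ` is the unique
solution of the linear system `H γ = g`. -/
theorem stmt5 (σ ρ : ℝ) (hσ : 0 < σ) (hρ : 0 < ρ) (N : ℕ) (hN : 1 ≤ N)
    (lam : Fin N → ℂ) (hinj : Function.Injective lam)
    (him : ∀ j, (lam j).re = 0) :
    ∃ γ : Fin N → ℂ,
      (∀ γ' : Fin N → ℂ, errE σ ρ lam γ ≤ errE σ ρ lam γ') ∧
      (∀ γ' : Fin N → ℂ, (∀ γ'' : Fin N → ℂ, errE σ ρ lam γ' ≤ errE σ ρ lam γ'') → γ' = γ) ∧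
      (∀ j, (γ j).im = 0) ∧
      (∀ j : Fin N, ∑ m : Fin N,
          (Real.sqrt (2 * π * ρ) : ℂ) * Complex.exp ((lam j - lam m) ^ 2 * (ρ : ℂ) / 2) * γ m
            = (Real.sqrt (2 * π * σ * ρ / (σ + ρ)) : ℂ) *
                Complex.exp ((σ : ℂ) * (ρ : ℂ) * (lam j) ^ 2 / (2 * ((σ : ℂ) + (ρ : ℂ))))) ∧
      (∀ γ' : Fin N → ℂ,
          (∀ j : Fin N, ∑ m : Fin N,
              (Real.sqrt (2 * π * ρ) : ℂ) * Complex.exp ((lam j - lam m) ^ 2 * (ρ : ℂ) / 2) * γ' m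
                = (Real.sqrt (2 * π * σ * ρ / (σ + ρ)) : ℂ) *
                    Complex.exp ((σ : ℂ) * (ρ : ℂ) * (lam j) ^ 2 / (2 * ((σ : ℂ) + (ρ : ℂ)))))
            → γ' = γ) := by
  classical
  set Hc : Matrix (Fin N) (Fin N) ℂ := Matrix.of fun j m =>
    (Real.sqrt (2 * π * ρ) : ℂ) * Complex.exp ((lam j - lam m) ^ 2 * (ρ : ℂ) / 2) with hHc
  set gv : Fin N → ℂ := fun j => (Real.sqrt (2 * π * σ * ρ / (σ + ρ)) : ℂ) *
    Complex.exp ((σ : ℂ) * (ρ : ℂ) * (lam j) ^ 2 / (2 * ((σ : ℂ) + (ρ : ℂ)))) with hgv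
  have hmulvec : ∀ u : Fin N → ℂ, ∀ j, Hc.mulVecLin u j = ∑ m, Hc j m * u m := by
    intro u j
    simp [Matrix.mulVecLin_apply, Matrix.mulVec, dotProduct]
  have hHcconj : ∀ j m, (starRingEnd ℂ) (Hc j m) = Hc j m := fun j m => conj_H ρ lam him j m
  have hgvconj : ∀ j, (starRingEnd ℂ) (gv j) = gv j := fun j => conj_g σ ρ lam him j
  have hker : ∀ u : Fin N → ℂ, Hc.mulVecLin u = 0 → u = 0 := by
    intro u hu
    by_contra hne
    have hpos := Q_pos ρ hρ lam hinj him u hne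
    rw [Q_eq_re ρ hρ lam him u] at hpos
    have hz0 : ∀ j : Fin N, (∑ m, (Real.sqrt (2 * π * ρ) : ℂ)
        * Complex.exp ((lam j - lam m) ^ 2 * (ρ : ℂ) / 2) * u m) = 0 := by
      intro j
      exact (hmulvec u j).symm.trans (congrFun hu j)
    have hz : (∑ j, u j * (starRingEnd ℂ) (∑ m, (Real.sqrt (2 * π * ρ) : ℂ)
        * Complex.exp ((lam j - lam m) ^ 2 * (ρ : ℂ) / 2) * u m)) = 0 := by
      refine Finset.sum_eq_zero fun j _ => ?_
      rw [hz0 j, map_zero, mul_zero]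
    rw [hz] at hpos
    simp at hpos
  have hinjL : Function.Injective Hc.mulVecLin :=
    LinearMap.ker_eq_bot.mp (LinearMap.ker_eq_bot'.mpr hker)
  have hsurj : Function.Surjective Hc.mulVecLin :=
    LinearMap.injective_iff_surjective.mp hinjL
  obtain ⟨γ, hγ⟩ := hsurj gv
  have hγsys : ∀ j : Fin N, ∑ m : Fin N,
      (Real.sqrt (2 * π * ρ) : ℂ) * Complex.exp ((lam j - lam m) ^ 2 * (ρ : ℂ) / 2) * γ m
        = (Real.sqrt (2 * π * σ * ρ / (σ + ρ)) : ℂ) *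
            Complex.exp ((σ : ℂ) * (ρ : ℂ) * (lam j) ^ 2 / (2 * ((σ : ℂ) + (ρ : ℂ)))) :=
    fun j => (hmulvec γ j).symm.trans (congrFun hγ j)
  have hγreal : ∀ j, (γ j).im = 0 := by
    have hconjsol : Hc.mulVecLin (fun m => (starRingEnd ℂ) (γ m)) = gv := by
      funext j
      rw [hmulvec]
      calc ∑ m, Hc j m * (starRingEnd ℂ) (γ m)
          = (starRingEnd ℂ) (∑ m, Hc j m * γ m) := by
            rw [map_sum]
            exact Finset.sum_congr rfl fun m _ => by rw [map_mul, hHcconj j m]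
        _ = (starRingEnd ℂ) (gv j) := by
            exact congrArg _ (hγsys j)
        _ = gv j := hgvconj j
    have heq : (fun m => (starRingEnd ℂ) (γ m)) = γ := hinjL (hconjsol.trans hγ.symm)
    intro j
    exact Complex.conj_eq_iff_im.mp (congrFun heq j)
  have hexp : ∀ v : Fin N → ℂ, errE σ ρ lam v = errE σ ρ lam γ
      + ∫ t : ℝ, Complex.normSq (esum lam (v - γ) t) * Real.exp (-t^2/(2*ρ)) :=
    errE_expand σ ρ hσ hρ lam him γ hγsys
  refine ⟨γ, ?_, ?_, hγreal, hγsys, ?_⟩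
  · intro γ'
    rw [hexp γ']
    exact le_add_of_nonneg_right (integral_nonneg fun t =>
      mul_nonneg (Complex.normSq_nonneg _) (Real.exp_pos _).le)
  · intro γ' hmin
    by_contra hne
    have h1 : errE σ ρ lam γ' ≤ errE σ ρ lam γ := hmin γ
    rw [hexp γ'] at h1
    have h2 := Q_pos ρ hρ lam hinj him (γ' - γ) (sub_ne_zero.mpr hne)
    linarith
  · intro γ' hs
    apply hinjL
    funext j
    rw [hmulvec γ' j, hmulvec γ j]
    exact (hs j).trans (hγsys j).symm
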